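/- arXiv:2511.04818 — 4 statements merged into one kernel-verified Lean document; each statement's English description precedes it below -/
import Mathlib

section
/- Let φ : ℝ → ℝ be differentiable and increasing with 0 < φ'(ξ) ≤ C |ξ|^{-(1+2s)} for |ξ| ≥ 1 and φ' bounded. Fix a unit vector e ∈ ℝ^n, d₀ ∈ ℝ with |d₀| ≥ δ > 2ε^{1/2}, and ε ∈ (0,1). Then ∫_{{z : |z| > cδ}} φ'((d₀ + e·z)/ε) |z|^{-(n+2s)} dz ≤ C' ε^s / δ^{4s}, where c > 0 is a fixed constant and C' depends only on n, s, c, and C. -/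
/-!
Bound `φ'(ξ) ≤ C max(1, |ξ|)^{-(1+2s)}` and write `z = t e + y` with `y ⊥ e`. On `|z| > r` we have
`|z| ≥ max(r, |y|)`, so the integral is at most the product of the one-dimensional integral
`∫ C max(1, |(d₀ + t)/ε|)^{-(1+2s)} dt`, which is `O(ε)` by scaling, and the `(n-1)`-dimensional
integral `∫ max(r, |y|)^{-(n+2s)} dy`, which is `O(r^{-(1+2s)})` by scaling. With `r = cδ` this
gives `O(ε δ^{-(1+2s)})`, and `ε δ^{-(1+2s)} ≤ ε^s δ^{-4s}` because `√ε ≤ δ` and `ε ≤ 1`.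
-/

open MeasureTheory Set Module ENNReal

section Radial

variable {E : Type*} [NormedAddCommGroup E] [NormedSpace ℝ E] [MeasurableSpace E] [BorelSpace E]
  [FiniteDimensional ℝ E] (μ : Measure E) [μ.IsAddHaarMeasure]

theorem lintegral_comp_smul_addHaar {f : E → ℝ≥0∞} (hf : Measurable f) {R : ℝ} (hR : R ≠ 0) :
    ∫⁻ x, f (R • x) ∂μ = ENNReal.ofReal |(R ^ finrank ℝ E)⁻¹| * ∫⁻ x, f x ∂μ := by
  rw [← lintegral_map hf (measurable_const_smul R), Measure.map_addHaar_smul μ hR,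
    lintegral_smul_measure, smul_eq_mul]

theorem lintegral_max_one_norm_rpow_neg_lt_top {q : ℝ} (hq : (finrank ℝ E : ℝ) < q) :
    ∫⁻ y, ENNReal.ofReal (max 1 ‖y‖ ^ (-q)) ∂μ < ∞ := by
  have hq0 : 0 ≤ q := (Nat.cast_nonneg _).trans hq.le
  have hle : ∀ y : E, max 1 ‖y‖ ^ (-q) ≤ (2⁻¹ : ℝ) ^ (-q) * (1 + ‖y‖) ^ (-q) := fun y => by
    rw [← Real.mul_rpow (by norm_num) (by positivity)]
    refine Real.rpow_le_rpow_of_nonpos (by positivity) ?_ (neg_nonpos.2 hq0)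
    linarith [le_max_left 1 ‖y‖, le_max_right 1 ‖y‖]
  calc ∫⁻ y, ENNReal.ofReal (max 1 ‖y‖ ^ (-q)) ∂μ
      ≤ ∫⁻ y, ENNReal.ofReal ((2⁻¹ : ℝ) ^ (-q)) * ENNReal.ofReal ((1 + ‖y‖) ^ (-q)) ∂μ :=
        lintegral_mono fun y => by
          rw [← ENNReal.ofReal_mul (by positivity)]; exact ENNReal.ofReal_le_ofReal (hle y)
    _ < ∞ := by
        rw [lintegral_const_mul _ (by fun_prop)]
        exact ENNReal.mul_lt_top ofReal_lt_top (finite_integral_one_add_norm hq)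

theorem lintegral_max_norm_rpow_neg (q : ℝ) {r : ℝ} (hr : 0 < r) :
    ∫⁻ y, ENNReal.ofReal (max r ‖y‖ ^ (-q)) ∂μ =
      ENNReal.ofReal (r ^ ((finrank ℝ E : ℝ) - q)) *
        ∫⁻ y, ENNReal.ofReal (max 1 ‖y‖ ^ (-q)) ∂μ := by
  have hscale := lintegral_comp_smul_addHaar μ
    (f := fun y : E => ENNReal.ofReal (max r ‖y‖ ^ (-q))) (by fun_prop) hr.ne'
  have hmax : ∀ y : E, max r ‖r • y‖ ^ (-q) = r ^ (-q) * max 1 ‖y‖ ^ (-q) := fun y => by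
    rw [norm_smul, Real.norm_of_nonneg hr.le, ← Real.mul_rpow hr.le (by positivity),
      mul_max_of_nonneg _ _ hr.le, mul_one]
  simp only [hmax, ENNReal.ofReal_mul (Real.rpow_nonneg hr.le _)] at hscale
  rw [lintegral_const_mul _ (by fun_prop), abs_of_nonneg (by positivity)] at hscale
  have hrd : (0 : ℝ) < r ^ finrank ℝ E := by positivity
  calc ∫⁻ y, ENNReal.ofReal (max r ‖y‖ ^ (-q)) ∂μ
      = ENNReal.ofReal (r ^ finrank ℝ E) *
          (ENNReal.ofReal (r ^ finrank ℝ E)⁻¹ * ∫⁻ y, ENNReal.ofReal (max r ‖y‖ ^ (-q)) ∂μ) := by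
        rw [← mul_assoc, ← ENNReal.ofReal_mul hrd.le, mul_inv_cancel₀ hrd.ne', ENNReal.ofReal_one,
          one_mul]
    _ = _ := by
        rw [← hscale, ← mul_assoc, ← ENNReal.ofReal_mul hrd.le, sub_eq_add_neg,
          Real.rpow_add hr, Real.rpow_natCast]

end Radial

namespace EuclideanSpace

variable {m : ℕ}

/-- For a unit vector `e`, this is `t • e + y'`, where `y ↦ y'` is an isometry onto `eᗮ`. -/
noncomputable def consAlong (e : EuclideanSpace ℝ (Fin (m + 1)))
    (p : ℝ × EuclideanSpace ℝ (Fin m)) : EuclideanSpace ℝ (Fin (m + 1)) :=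
  (ℝ ∙ (single 0 1 - e))ᗮ.reflection (WithLp.toLp 2 (Fin.cons p.1 p.2))

theorem measurePreserving_consAlong (e : EuclideanSpace ℝ (Fin (m + 1))) :
    MeasurePreserving (consAlong e) (volume.prod volume) volume := by
  have hcons :=
    ((measurePreserving_piFinSuccAbove (fun _ : Fin (m + 1) => (volume : Measure ℝ)) 0).symm _).comp
      ((MeasurePreserving.id volume).prod (PiLp.volume_preserving_ofLp (Fin m)))
  refine ((((ℝ ∙ (single 0 1 - e))ᗮ.reflection).measurePreserving).comp
    ((PiLp.volume_preserving_toLp (Fin (m + 1))).comp hcons)).congr ?_ (.of_forall fun p => ?_)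
  · unfold consAlong; fun_prop
  · simp only [Function.comp_apply, MeasurableEquiv.piFinSuccAbove_symm_apply,
      Fin.insertNthEquiv_zero, consAlong, EmbeddingLike.apply_eq_iff_eq, WithLp.toLp.injEq]
    rfl

theorem inner_consAlong {e : EuclideanSpace ℝ (Fin (m + 1))} (he : ‖e‖ = 1)
    (p : ℝ × EuclideanSpace ℝ (Fin m)) : inner ℝ e (consAlong e p) = p.1 := by
  have hreflect : (ℝ ∙ (single 0 1 - e))ᗮ.reflection (single 0 1) = e :=
    Submodule.reflection_sub (by simp [he])
  rw [consAlong]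
  nth_rw 1 [← hreflect]
  rw [LinearIsometryEquiv.inner_map_map, inner_single_left]
  simp

theorem norm_consAlong_sq (e : EuclideanSpace ℝ (Fin (m + 1)))
    (p : ℝ × EuclideanSpace ℝ (Fin m)) : ‖consAlong e p‖ ^ 2 = p.1 ^ 2 + ‖p.2‖ ^ 2 := by
  rw [consAlong, LinearIsometryEquiv.norm_map, norm_sq_eq, norm_sq_eq, Fin.sum_univ_succ]
  simp

end EuclideanSpace

theorem lintegral_inner_mul_norm_rpow_le {m : ℕ} {e : EuclideanSpace ℝ (Fin (m + 1))}
    (he : ‖e‖ = 1) {g : ℝ → ℝ≥0∞} (hg : Measurable g) {q r : ℝ} (hq : 0 ≤ q) (hr : 0 < r) :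
    ∫⁻ z in {z : EuclideanSpace ℝ (Fin (m + 1)) | r < ‖z‖},
        g (inner ℝ e z) * ENNReal.ofReal (‖z‖ ^ (-q)) ≤
      (∫⁻ t, g t) * ∫⁻ y : EuclideanSpace ℝ (Fin m), ENNReal.ofReal (max r ‖y‖ ^ (-q)) := by
  have hS : MeasurableSet {z : EuclideanSpace ℝ (Fin (m + 1)) | r < ‖z‖} :=
    measurableSet_lt measurable_const measurable_norm
  rw [← lintegral_indicator hS, ← (EuclideanSpace.measurePreserving_consAlong e).lintegral_comp
      (Measurable.indicator (by fun_prop) hS),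
    ← lintegral_prod_mul hg.aemeasurable (by fun_prop)]
  refine lintegral_mono fun p => ?_
  by_cases hp : r < ‖EuclideanSpace.consAlong e p‖
  · have hnorm : ‖p.2‖ ≤ ‖EuclideanSpace.consAlong e p‖ := by
      nlinarith [EuclideanSpace.norm_consAlong_sq e p, norm_nonneg p.2,
        norm_nonneg (EuclideanSpace.consAlong e p), sq_nonneg p.1]
    rw [indicator_of_mem (show _ ∈ {z : EuclideanSpace ℝ (Fin (m + 1)) | r < ‖z‖} from hp),
      EuclideanSpace.inner_consAlong he]
    exact mul_le_mul_right (ENNReal.ofReal_le_ofReal (Real.rpow_le_rpow_of_nonpos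
      (lt_max_of_lt_left hr) (max_le hp.le hnorm) (neg_nonpos.2 hq))) _
  · rw [indicator_of_notMem (show _ ∉ {z : EuclideanSpace ℝ (Fin (m + 1)) | r < ‖z‖} from hp)]
    exact zero_le

theorem lintegral_comp_add_div {f : ℝ → ℝ≥0∞} (hf : Measurable f) (a : ℝ) {ε : ℝ} (hε : 0 < ε) :
    ∫⁻ t, f ((a + t) / ε) = ENNReal.ofReal ε * ∫⁻ u, f u := by
  rw [lintegral_add_left_eq_self (fun t => f (t / ε)) a]
  simp only [div_eq_inv_mul, ← smul_eq_mul]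
  rw [lintegral_comp_smul_addHaar volume hf (inv_ne_zero hε.ne'), finrank_self, pow_one, inv_inv,
    abs_of_pos hε, smul_eq_mul]

theorem le_mul_max_one_rpow_neg {ψ : ℝ → ℝ} {C p : ℝ} (hbdd : ∀ ξ, ψ ξ ≤ C)
    (hdecay : ∀ ξ, 1 ≤ |ξ| → ψ ξ ≤ C * |ξ| ^ (-p)) (ξ : ℝ) : ψ ξ ≤ C * max 1 |ξ| ^ (-p) := by
  rcases le_total |ξ| 1 with h | h
  · simpa [max_eq_left h] using hbdd ξ
  · simpa [max_eq_right h] using hdecay ξ h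

theorem mul_rpow_neg_le_rpow_div_rpow {ε δ s : ℝ} (hε0 : 0 < ε) (hε1 : ε ≤ 1)
    (hεδ : √ε ≤ δ) (hs : s ≤ 1 / 2) : ε * δ ^ (-(1 + 2 * s)) ≤ ε ^ s / δ ^ (4 * s) := by
  have hδ : 0 < δ := (Real.sqrt_pos.2 hε0).trans_le hεδ
  have hsmall : ε ^ (1 - s) ≤ δ ^ (1 - 2 * s) :=
    calc ε ^ (1 - s) ≤ ε ^ ((1 - 2 * s) / 2) :=
          Real.rpow_le_rpow_of_exponent_ge hε0 hε1 (by linarith)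
      _ = √ε ^ (1 - 2 * s) := by
          rw [Real.sqrt_eq_rpow, ← Real.rpow_mul hε0.le]; ring_nf
      _ ≤ δ ^ (1 - 2 * s) := by gcongr; linarith
  calc ε * δ ^ (-(1 + 2 * s)) = ε ^ s * (ε ^ (1 - s) * δ ^ (-(1 + 2 * s))) := by
        rw [← mul_assoc, ← Real.rpow_add hε0, add_sub_cancel, Real.rpow_one]
    _ ≤ ε ^ s * (δ ^ (1 - 2 * s) * δ ^ (-(1 + 2 * s))) := by gcongr
    _ = ε ^ s / δ ^ (4 * s) := by
        rw [← Real.rpow_add hδ, div_eq_mul_inv, ← Real.rpow_neg hδ.le]; ring_nf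

theorem setIntegral_comp_inner_mul_norm_rpow_le {m : ℕ} {p q C r ε : ℝ} (hp : 1 < p)
    (hq : (m : ℝ) < q) (hr : 0 < r) (hε : 0 < ε) {ψ : ℝ → ℝ} (hψ0 : ∀ ξ, 0 ≤ ψ ξ)
    (hψ : ∀ ξ, ψ ξ ≤ C * max 1 |ξ| ^ (-p)) {e : EuclideanSpace ℝ (Fin (m + 1))} (he : ‖e‖ = 1)
    (d₀ : ℝ) :
    ∫ z in {z : EuclideanSpace ℝ (Fin (m + 1)) | r < ‖z‖},
        ψ ((d₀ + inner ℝ e z) / ε) * ‖z‖ ^ (-q) ≤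
      C * (∫⁻ u : ℝ, ENNReal.ofReal (max 1 ‖u‖ ^ (-p))).toReal *
        (∫⁻ y : EuclideanSpace ℝ (Fin m), ENNReal.ofReal (max 1 ‖y‖ ^ (-q))).toReal *
          ε * r ^ ((m : ℝ) - q) := by
  have hC : 0 ≤ C := by simpa using (hψ0 0).trans (hψ 0)
  have hI₁ : ∫⁻ u : ℝ, ENNReal.ofReal (max 1 ‖u‖ ^ (-p)) ≠ ∞ :=
    (lintegral_max_one_norm_rpow_neg_lt_top volume (by simpa using hp)).ne
  have hIₘ : ∫⁻ y : EuclideanSpace ℝ (Fin m), ENNReal.ofReal (max 1 ‖y‖ ^ (-q)) ≠ ∞ :=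
    (lintegral_max_one_norm_rpow_neg_lt_top volume (by simpa using hq)).ne
  set g : ℝ → ℝ≥0∞ := fun t => ENNReal.ofReal C * ENNReal.ofReal (max 1 ‖(d₀ + t) / ε‖ ^ (-p))
  have hpointwise : ∀ z : EuclideanSpace ℝ (Fin (m + 1)),
      ENNReal.ofReal ‖ψ ((d₀ + inner ℝ e z) / ε) * ‖z‖ ^ (-q)‖ ≤
        g (inner ℝ e z) * ENNReal.ofReal (‖z‖ ^ (-q)) := fun z => by
    rw [norm_mul, Real.norm_of_nonneg (hψ0 _), Real.norm_of_nonneg (by positivity),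
      ENNReal.ofReal_mul (hψ0 _)]
    refine mul_le_mul_left ?_ _
    simp only [g, ← ENNReal.ofReal_mul hC, Real.norm_eq_abs]
    exact ENNReal.ofReal_le_ofReal (hψ _)
  have hg : ∫⁻ t, g t =
      ENNReal.ofReal C * (ENNReal.ofReal ε * ∫⁻ u : ℝ, ENNReal.ofReal (max 1 ‖u‖ ^ (-p))) := by
    rw [lintegral_const_mul _ (by fun_prop),
      lintegral_comp_add_div (f := fun u => ENNReal.ofReal (max 1 ‖u‖ ^ (-p))) (by fun_prop) d₀ hε]
  refine (Real.le_norm_self _).trans ((norm_integral_le_lintegral_norm _).trans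
    (ENNReal.toReal_le_of_le_ofReal (by positivity) ?_))
  calc ∫⁻ z in {z : EuclideanSpace ℝ (Fin (m + 1)) | r < ‖z‖},
        ENNReal.ofReal ‖ψ ((d₀ + inner ℝ e z) / ε) * ‖z‖ ^ (-q)‖
      ≤ ∫⁻ z in {z : EuclideanSpace ℝ (Fin (m + 1)) | r < ‖z‖},
          g (inner ℝ e z) * ENNReal.ofReal (‖z‖ ^ (-q)) := lintegral_mono hpointwise
    _ ≤ (∫⁻ t, g t) * ∫⁻ y : EuclideanSpace ℝ (Fin m), ENNReal.ofReal (max r ‖y‖ ^ (-q)) :=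
        lintegral_inner_mul_norm_rpow_le he (by fun_prop) ((Nat.cast_nonneg m).trans hq.le) hr
    _ = _ := by
        rw [hg, lintegral_max_norm_rpow_neg volume q hr, finrank_euclideanSpace_fin,
          ENNReal.ofReal_mul (by positivity), ENNReal.ofReal_mul (by positivity),
          ENNReal.ofReal_mul (by positivity), ENNReal.ofReal_mul hC, ENNReal.ofReal_toReal hI₁,
          ENNReal.ofReal_toReal hIₘ]
        ring

theorem stmt_6_general (n : ℕ) (s : ℝ) (hs : s ∈ Set.Ioo (0 : ℝ) (1/2))
    (c C : ℝ) (hc : 0 < c) (hC : 0 < C) :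
    ∃ C' : ℝ, 0 < C' ∧
      ∀ (φ φ' : ℝ → ℝ),
        (∀ ξ, HasDerivAt φ (φ' ξ) ξ) →
        (∀ ξ, 0 < φ' ξ) → (∀ ξ, φ' ξ ≤ C) →
        (∀ ξ : ℝ, 1 ≤ |ξ| → φ' ξ ≤ C * |ξ| ^ (-(1 + 2*s))) →
        ∀ (e : EuclideanSpace ℝ (Fin n)), ‖e‖ = 1 →
        ∀ (d₀ δ ε : ℝ), 0 < δ → δ ≤ |d₀| → 2 * Real.sqrt ε < δ → ε ∈ Set.Ioo (0:ℝ) 1 →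
          (∫ z in {z : EuclideanSpace ℝ (Fin n) | c * δ < ‖z‖},
              φ' ((d₀ + (inner ℝ e z : ℝ)) / ε) * ‖z‖ ^ (-((n : ℝ) + 2*s)))
            ≤ C' * ε ^ s / δ ^ (4*s) := by
  obtain ⟨hs0, hs1⟩ := hs
  cases n with
  | zero =>
    refine ⟨1, one_pos, fun _ _ _ _ _ _ e he => ?_⟩
    simp [Subsingleton.elim e 0] at he
  | succ m =>
    set K := C * (∫⁻ u : ℝ, ENNReal.ofReal (max 1 ‖u‖ ^ (-(1 + 2 * s)))).toReal *
      (∫⁻ y : EuclideanSpace ℝ (Fin m),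
        ENNReal.ofReal (max 1 ‖y‖ ^ (-(((m + 1 : ℕ) : ℝ) + 2 * s)))).toReal *
      c ^ (-(1 + 2 * s))
    refine ⟨K + 1, by positivity, ?_⟩
    intro φ φ' _ hpos hbdd hdecay e he d₀ δ ε hδ _ hεδ ⟨hε0, hε1⟩
    have hexp : (m : ℝ) - (((m + 1 : ℕ) : ℝ) + 2 * s) = -(1 + 2 * s) := by push_cast; ring
    calc _ ≤ _ := setIntegral_comp_inner_mul_norm_rpow_le (by linarith) (by push_cast; linarith)
            (mul_pos hc hδ) hε0 (fun ξ => (hpos ξ).le) (le_mul_max_one_rpow_neg hbdd hdecay) he d₀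
      _ = K * (ε * δ ^ (-(1 + 2 * s))) := by
          rw [hexp, Real.mul_rpow hc.le hδ.le]; ring
      _ ≤ (K + 1) * (ε ^ s / δ ^ (4 * s)) :=
          mul_le_mul (le_add_of_nonneg_right zero_le_one)
            (mul_rpow_neg_le_rpow_div_rpow hε0 hε1.le (by linarith [Real.sqrt_nonneg ε]) hs1.le)
            (by positivity) (by positivity)
      _ = _ := by ring

/-- Let φ be differentiable and increasing with 0 < φ' ≤ C|ξ|^{-(1+2s)}
for |ξ| ≥ 1 and φ' bounded. For a unit vector e, |d₀| ≥ δ > 2ε^{1/2}, ε ∈ (0,1),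
∫_{|z|>cδ} φ'((d₀+e·z)/ε) |z|^{-(n+2s)} dz ≤ C' ε^s/δ^{4s},
with C' depending only on n, s, c, C. -/
theorem stmt_6 (n : ℕ) (hn : 2 ≤ n) (s : ℝ) (hs : s ∈ Set.Ioo (0 : ℝ) (1/2))
    (c C : ℝ) (hc : 0 < c) (hC : 0 < C) :
    ∃ C' : ℝ, 0 < C' ∧
      ∀ (φ φ' : ℝ → ℝ),
        (∀ ξ, HasDerivAt φ (φ' ξ) ξ) →
        (∀ ξ, 0 < φ' ξ) → (∀ ξ, φ' ξ ≤ C) →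
        (∀ ξ : ℝ, 1 ≤ |ξ| → φ' ξ ≤ C * |ξ| ^ (-(1 + 2*s))) →
        ∀ (e : EuclideanSpace ℝ (Fin n)), ‖e‖ = 1 →
        ∀ (d₀ δ ε : ℝ), 0 < δ → δ ≤ |d₀| → 2 * Real.sqrt ε < δ → ε ∈ Set.Ioo (0:ℝ) 1 →
          (∫ z in {z : EuclideanSpace ℝ (Fin n) | c * δ < ‖z‖},
              φ' ((d₀ + (inner ℝ e z : ℝ)) / ε) * ‖z‖ ^ (-((n : ℝ) + 2*s)))
            ≤ C' * ε ^ s / δ ^ (4*s) :=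
  stmt_6_general n s hs c C hc hC
end

section
/- Let Ω ⊂ ℝ^n be a bounded open set with C² boundary and let d be its signed distance function (positive inside Ω), smooth on the tubular neighborhood {|d| < 2ρ}. Then for every x with |d(x)| < ρ, the two integrals κ⁺[x,d] = ∫_{{d(x+z) > d(x), ∇d(x)·z < 0}} |z|^{-(n+2s)} dz and κ⁻[x,d] = ∫_{{d(x+z) < d(x), ∇d(x)·z > 0}} |z|^{-(n+2s)} dz are finite. -/
open MeasureTheory Set Classical

/-- The signed distance function to a set Ω (positive inside, negative outside),
measured from the topological boundary. -/
noncomputable def signedDistOld {E : Type*} [MetricSpace E] (Ω : Set E) (x : E) : ℝ :=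
  if x ∈ Ω then Metric.infDist x (frontier Ω) else -Metric.infDist x (frontier Ω)

/-!
On both sets the sign of `d (x + z) - d x` disagrees with that of `⟪∇d(x), z⟫`, so the linear
term is dominated by the Taylor remainder `O(‖z‖²)`. Near `z = 0` the sets therefore lie in the
cusp `|⟪∇d(x), z⟫| ≤ K ‖z‖²` around the tangent hyperplane, whose intersection with a ball of
radius `R` has volume `O(R ^ (n + 1))`; summing over dyadic annuli, `‖z‖ ^ (-(n + 2s))` is
integrable there because `n + 2s < n + 1`. Away from `0` it is integrable because `n + 2s > n`.
-/

open scoped InnerProductSpace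

section DyadicAnnulus

variable {E : Type*} [NormedAddCommGroup E]

def dyadicAnnulus (a : ℝ) : Set E := {z | a / 2 < ‖z‖ ∧ ‖z‖ ≤ a}

theorem measurableSet_dyadicAnnulus [MeasurableSpace E] [OpensMeasurableSpace E] (a : ℝ) :
    MeasurableSet (dyadicAnnulus a : Set E) :=
  (measurableSet_lt measurable_const measurable_norm).inter
    (measurableSet_le measurable_norm measurable_const)

theorem closedBall_zero_subset_insert_iUnion_dyadicAnnulus (r : ℝ) :
    Metric.closedBall (0 : E) r ⊆ insert 0 (⋃ k : ℕ, dyadicAnnulus (r / 2 ^ k)) := by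
  intro z hzr
  rcases eq_or_ne z 0 with rfl | hz
  · exact Set.mem_insert _ _
  have hz' : 0 < ‖z‖ := norm_pos_iff.mpr hz
  rw [mem_closedBall_zero_iff] at hzr
  obtain ⟨k, hk, hk'⟩ := exists_nat_pow_near ((one_le_div hz').mpr hzr) one_lt_two
  refine Set.mem_insert_of_mem _ (Set.mem_iUnion.mpr ⟨k, ?_, ?_⟩)
  · rw [div_div, ← pow_succ, div_lt_iff₀ (by positivity)]
    rwa [div_lt_iff₀ hz', mul_comm] at hk'
  · rw [le_div_iff₀ (by positivity)]
    rwa [le_div_iff₀ hz', mul_comm] at hk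

theorem setLIntegral_rpow_neg_norm_inter_dyadicAnnulus_le [MeasurableSpace E] [BorelSpace E]
    {μ : Measure E} {S : Set E} (hS : MeasurableSet S) {a c p m : ℝ} (ha : 0 < a)
    (hp : 0 ≤ p) (hμ : μ (S ∩ Metric.closedBall 0 a) ≤ ENNReal.ofReal (c * a ^ m)) :
    ∫⁻ z in S ∩ dyadicAnnulus a, ‖‖z‖ ^ (-p)‖ₑ ∂μ ≤
      ENNReal.ofReal (c * 2 ^ p * a ^ (m - p)) :=
  calc ∫⁻ z in S ∩ dyadicAnnulus a, ‖‖z‖ ^ (-p)‖ₑ ∂μ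
      ≤ ∫⁻ _ in S ∩ dyadicAnnulus a, ENNReal.ofReal ((a / 2) ^ (-p)) ∂μ := by
        refine setLIntegral_mono' (hS.inter (measurableSet_dyadicAnnulus a)) fun z hz => ?_
        rw [Real.enorm_of_nonneg (by positivity)]
        exact ENNReal.ofReal_le_ofReal
          (Real.rpow_le_rpow_of_nonpos (by positivity) hz.2.1.le (neg_nonpos.mpr hp))
    _ ≤ ENNReal.ofReal ((a / 2) ^ (-p)) * ENNReal.ofReal (c * a ^ m) := by
        rw [setLIntegral_const]
        refine mul_le_mul_right ((measure_mono ?_).trans hμ) _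
        exact Set.inter_subset_inter_right _ fun z hz => mem_closedBall_zero_iff.mpr hz.2
    _ = ENNReal.ofReal (c * 2 ^ p * a ^ (m - p)) := by
        rw [← ENNReal.ofReal_mul (by positivity), Real.div_rpow ha.le two_pos.le,
          Real.rpow_neg two_pos.le, Real.rpow_neg ha.le, Real.rpow_sub ha]
        field_simp

end DyadicAnnulus

theorem summable_div_two_pow_rpow {r q : ℝ} (hr : 0 ≤ r) (hq : 0 < q) :
    Summable fun k : ℕ => (r / 2 ^ k) ^ q := by
  have hlt : ((2 : ℝ) ^ q)⁻¹ < 1 := inv_lt_one_of_one_lt₀ (Real.one_lt_rpow one_lt_two hq)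
  refine ((summable_geometric_of_lt_one (by positivity) hlt).mul_left (r ^ q)).congr fun k => ?_
  have h2k : ((2 : ℝ) ^ k) ^ q = (2 ^ q) ^ k := by
    rw [← Real.rpow_natCast, ← Real.rpow_natCast, ← Real.rpow_mul two_pos.le,
      ← Real.rpow_mul two_pos.le, mul_comm]
  rw [Real.div_rpow hr (by positivity), h2k, inv_pow, div_eq_mul_inv]

/-- The dyadic annuli `r / 2 ^ (k + 1) < ‖z‖ ≤ r / 2 ^ k` contribute a geometric series of ratio
`2 ^ (p - m) < 1`. -/
theorem integrableOn_rpow_neg_norm_inter_closedBall_of_measure_le {E : Type*}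
    [NormedAddCommGroup E] [MeasurableSpace E] [BorelSpace E] {μ : Measure E} {S : Set E}
    (hS : MeasurableSet S) {c p m r : ℝ} (hc : 0 ≤ c) (hp : 0 < p) (hpm : p < m) (hr : 0 < r)
    (hμ : ∀ R, 0 < R → μ (S ∩ Metric.closedBall 0 R) ≤ ENNReal.ofReal (c * R ^ m)) :
    IntegrableOn (fun z => ‖z‖ ^ (-p)) (S ∩ Metric.closedBall 0 r) μ := by
  have hcover :
      S ∩ Metric.closedBall 0 r ⊆ {0} ∪ ⋃ k : ℕ, S ∩ dyadicAnnulus (r / 2 ^ k) := by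
    rintro z ⟨hzS, hzr⟩
    rcases closedBall_zero_subset_insert_iUnion_dyadicAnnulus r hzr with rfl | hz
    · exact Or.inl rfl
    · obtain ⟨k, hk⟩ := Set.mem_iUnion.mp hz
      exact Or.inr (Set.mem_iUnion.mpr ⟨k, hzS, hk⟩)
  have hsum : Summable fun k : ℕ => c * 2 ^ p * (r / 2 ^ k) ^ (m - p) :=
    (summable_div_two_pow_rpow hr.le (by linarith)).mul_left _
  refine IntegrableOn.mono_set (IntegrableOn.union ?_ ⟨?_, ?_⟩) hcover
  · exact (integrableOn_singleton_iff).mpr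
      (Or.inl (by simp [Real.zero_rpow (neg_ne_zero.mpr hp.ne')]))
  · exact Measurable.aestronglyMeasurable (by fun_prop)
  · calc ∫⁻ z in ⋃ k : ℕ, S ∩ dyadicAnnulus (r / 2 ^ k), ‖‖z‖ ^ (-p)‖ₑ ∂μ
        ≤ ∑' k : ℕ, ∫⁻ z in S ∩ dyadicAnnulus (r / 2 ^ k), ‖‖z‖ ^ (-p)‖ₑ ∂μ :=
          lintegral_iUnion_le _ _
      _ ≤ ∑' k : ℕ, ENNReal.ofReal (c * 2 ^ p * (r / 2 ^ k) ^ (m - p)) :=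
          ENNReal.tsum_le_tsum fun k => setLIntegral_rpow_neg_norm_inter_dyadicAnnulus_le hS
            (by positivity) hp.le (hμ _ (by positivity))
      _ < ⊤ := by
          rw [← ENNReal.ofReal_tsum_of_nonneg (fun k => by positivity) hsum]
          exact ENNReal.ofReal_lt_top

theorem integrableOn_rpow_neg_norm_of_le_norm {E : Type*} [NormedAddCommGroup E]
    [NormedSpace ℝ E] [FiniteDimensional ℝ E] [MeasurableSpace E] [BorelSpace E]
    {μ : Measure E} [μ.IsAddHaarMeasure] {p r : ℝ} (hp : (Module.finrank ℝ E : ℝ) < p)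
    (hr : 0 < r) :
    IntegrableOn (fun z => ‖z‖ ^ (-p)) {z | r ≤ ‖z‖} μ := by
  have hp0 : 0 ≤ p := (Nat.cast_nonneg _).trans hp.le
  refine ((integrable_one_add_norm hp).const_mul ((1 + 1 / r) ^ p)).integrableOn.mono'
    (Measurable.aestronglyMeasurable (by fun_prop)).restrict
    ((ae_restrict_iff' (isClosed_le continuous_const continuous_norm).measurableSet).mpr
      (Filter.Eventually.of_forall fun z hrz => ?_))
  have hz : 0 < ‖z‖ := hr.trans_le hrz
  have hle : 1 + ‖z‖ ≤ (1 + 1 / r) * ‖z‖ := by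
    have : 1 ≤ ‖z‖ / r := (one_le_div hr).mpr hrz
    calc 1 + ‖z‖ ≤ ‖z‖ / r + ‖z‖ := by linarith
      _ = (1 + 1 / r) * ‖z‖ := by ring
  calc ‖‖z‖ ^ (-p)‖ = (1 + 1 / r) ^ p * ((1 + 1 / r) * ‖z‖) ^ (-p) := by
        rw [Real.norm_of_nonneg (by positivity), Real.mul_rpow (by positivity) hz.le,
          Real.rpow_neg (by positivity : (0 : ℝ) ≤ 1 + 1 / r)]
        field_simp
    _ ≤ (1 + 1 / r) ^ p * (1 + ‖z‖) ^ (-p) := by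
        exact mul_le_mul_of_nonneg_left
          (Real.rpow_le_rpow_of_nonpos (by positivity) hle (neg_nonpos.mpr hp0)) (by positivity)

theorem ContDiffAt.exists_norm_sub_sub_fderiv_le {E F : Type*} [NormedAddCommGroup E]
    [NormedSpace ℝ E] [NormedAddCommGroup F] [NormedSpace ℝ F] {f : E → F} {x : E}
    (hf : ContDiffAt ℝ 2 f x) :
    ∃ K r : ℝ, 0 ≤ K ∧ 0 < r ∧
      ∀ z, ‖z‖ ≤ r → ‖f (x + z) - f x - fderiv ℝ f x z‖ ≤ K * ‖z‖ ^ 2 := by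
  obtain ⟨K, t, ht, hlip⟩ := (hf.fderiv_right (m := 1) (by norm_num)).exists_lipschitzOnWith
  have hdiff : ∀ᶠ y in nhds x, DifferentiableAt ℝ f y :=
    (hf.eventually (by simp)).mono fun y hy => hy.differentiableAt (by norm_num)
  obtain ⟨r, hr, hball⟩ := Metric.nhds_basis_closedBall.mem_iff.mp (Filter.inter_mem ht hdiff)
  refine ⟨K, r, K.2, hr, fun z hz => ?_⟩
  have hsub : Metric.closedBall x ‖z‖ ⊆ t ∩ {y | DifferentiableAt ℝ f y} :=
    (Metric.closedBall_subset_closedBall hz).trans hball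
  have hx : x ∈ Metric.closedBall x ‖z‖ := Metric.mem_closedBall_self (norm_nonneg z)
  have hxz : x + z ∈ Metric.closedBall x ‖z‖ := by simp [dist_eq_norm]
  have hderiv : ∀ y ∈ Metric.closedBall x ‖z‖,
      HasFDerivWithinAt f (fderiv ℝ f y) (Metric.closedBall x ‖z‖) y :=
    fun y hy => (hsub hy).2.hasFDerivAt.hasFDerivWithinAt
  have hlip' :
      ∀ y ∈ Metric.closedBall x ‖z‖, ‖fderiv ℝ f y - fderiv ℝ f x‖ ≤ K * ‖z‖ := by
    intro y hy
    rw [← dist_eq_norm]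
    exact (hlip.dist_le_mul y (hsub hy).1 x (hsub hx).1).trans (mul_le_mul_of_nonneg_left hy K.2)
  have hmvt := Convex.norm_image_sub_le_of_norm_hasFDerivWithin_le' hderiv hlip'
    (convex_closedBall x ‖z‖) hx hxz
  rw [add_sub_cancel_left] at hmvt
  linarith

section InnerProductSpace

variable {E : Type*} [NormedAddCommGroup E] [InnerProductSpace ℝ E] [FiniteDimensional ℝ E]
  [MeasurableSpace E] [BorelSpace E]

/-- Sandwiched between two hyperplanes at distance `δ` from the origin, a ball of radius `R`
fits in a box with one side `2δ` and the others `2R`. -/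
theorem volume_setOf_abs_inner_le_inter_closedBall_le {u : E} (hu : ‖u‖ = 1) (δ R : ℝ) :
    volume ({z | |⟪u, z⟫_ℝ| ≤ δ} ∩ Metric.closedBall 0 R) ≤
      ENNReal.ofReal (2 * δ) * ENNReal.ofReal (2 * R) ^ (Module.finrank ℝ E - 1) := by
  set d := Module.finrank ℝ E
  have hd : 0 < d := Module.finrank_pos_iff_exists_ne_zero.mpr ⟨u, by rintro rfl; simp at hu⟩
  set i₀ : Fin d := ⟨0, hd⟩
  have hu_orth : Orthonormal ℝ (({i₀} : Set (Fin d)).domRestrict fun _ => u) :=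
    ⟨fun _ => hu, fun i j hij => (hij (Subtype.ext (i.2.trans j.2.symm))).elim⟩
  obtain ⟨b, hb⟩ := hu_orth.exists_orthonormalBasis_extension_of_card_eq (by simp [d])
  set c : Fin d → ℝ := fun i => if i = i₀ then δ else R
  have hT : MeasurePreserving (fun z : E => (b.repr z).ofLp) :=
    (PiLp.volume_preserving_ofLp (Fin d)).comp b.measurePreserving_repr
  have hbox : {z | |⟪u, z⟫_ℝ| ≤ δ} ∩ Metric.closedBall 0 R ⊆
      (fun z : E => (b.repr z).ofLp) ⁻¹' Set.univ.pi fun i => Set.Icc (-c i) (c i) := by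
    rintro z ⟨hzu, hzR⟩ i -
    rw [Set.mem_Icc, ← abs_le]
    change |b.repr z i| ≤ c i
    rw [b.repr_apply_apply]
    by_cases hi : i = i₀
    · simpa [c, hi, hb i₀ rfl] using hzu
    · simp only [c, if_neg hi]
      calc |⟪b i, z⟫_ℝ| ≤ ‖b i‖ * ‖z‖ := abs_real_inner_le_norm _ _
        _ ≤ R := by simpa [b.orthonormal.1 i] using hzR
  calc volume ({z | |⟪u, z⟫_ℝ| ≤ δ} ∩ Metric.closedBall 0 R)
      ≤ volume (Set.univ.pi fun i => Set.Icc (-c i) (c i)) := by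
        rw [← hT.measure_preimage
          (MeasurableSet.univ_pi fun _ => measurableSet_Icc).nullMeasurableSet]
        exact measure_mono hbox
    _ = ∏ i, ENNReal.ofReal (2 * c i) := by
        rw [volume_pi_pi]
        refine Finset.prod_congr rfl fun i _ => ?_
        rw [Real.volume_Icc]; ring_nf
    _ = ENNReal.ofReal (2 * δ) * ENNReal.ofReal (2 * R) ^ (d - 1) := by
        have hrest :
            ∀ i ∈ Finset.univ.erase i₀, ENNReal.ofReal (2 * c i) = ENNReal.ofReal (2 * R) :=
          fun i hi => by simp only [c, if_neg (Finset.ne_of_mem_erase hi)]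
        rw [← Finset.mul_prod_erase _ _ (Finset.mem_univ i₀), Finset.prod_congr rfl hrest,
          Finset.prod_const, Finset.card_erase_of_mem (Finset.mem_univ _), Finset.card_univ,
          Fintype.card_fin]
        simp only [c, if_pos rfl]

theorem integrableOn_rpow_neg_norm_setOf_abs_inner_le_sq_inter_closedBall {u : E} (hu : u ≠ 0)
    {C p r : ℝ} (hC : 0 ≤ C) (hp : 0 < p) (hpd : p < Module.finrank ℝ E + 1) (hr : 0 < r) :
    IntegrableOn (fun z => ‖z‖ ^ (-p))
      ({z | |⟪u, z⟫_ℝ| ≤ C * ‖z‖ ^ 2} ∩ Metric.closedBall 0 r) := by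
  set d := Module.finrank ℝ E
  have hd : 0 < d := Module.finrank_pos_iff_exists_ne_zero.mpr ⟨u, hu⟩
  have hu' : 0 < ‖u‖ := norm_pos_iff.mpr hu
  have hmeas : MeasurableSet {z : E | |⟪u, z⟫_ℝ| ≤ C * ‖z‖ ^ 2} :=
    (isClosed_le (by fun_prop) (by fun_prop)).measurableSet
  refine integrableOn_rpow_neg_norm_inter_closedBall_of_measure_le (c := 2 ^ d * (C / ‖u‖))
    (m := d + 1) hmeas (by positivity) hp hpd hr fun R hR => ?_
  have hslab : {z | |⟪u, z⟫_ℝ| ≤ C * ‖z‖ ^ 2} ∩ Metric.closedBall 0 R ⊆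
      {z | |⟪‖u‖⁻¹ • u, z⟫_ℝ| ≤ C / ‖u‖ * R ^ 2} ∩ Metric.closedBall 0 R := by
    rintro z ⟨hzu, hzR⟩
    refine ⟨?_, hzR⟩
    rw [mem_closedBall_zero_iff] at hzR
    rw [Set.mem_ofPred_eq, real_inner_smul_left, abs_mul, abs_inv, abs_norm, div_mul_eq_mul_div,
      inv_mul_le_iff₀ hu', mul_div_cancel₀ _ hu'.ne']
    exact hzu.trans (by gcongr)
  refine (measure_mono hslab).trans ((volume_setOf_abs_inner_le_inter_closedBall_le
    (norm_smul_inv_norm hu) _ _).trans (le_of_eq ?_))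
  have hpow : R ^ ((d : ℝ) + 1) = R ^ (d + 1) := by exact_mod_cast Real.rpow_natCast R (d + 1)
  rw [← ENNReal.ofReal_pow (by positivity), ← ENNReal.ofReal_mul (by positivity), hpow]
  congr 1
  obtain ⟨k, hk⟩ := Nat.exists_eq_add_of_lt hd
  rw [show Module.finrank ℝ E - 1 = k by omega, show d = k + 1 by omega]
  ring

theorem integrableOn_rpow_neg_norm_setOf_abs_inner_gradient_le_remainder {f : E → ℝ} {x : E}
    (hf : ContDiffAt ℝ 2 f x) {p : ℝ} (hp : (Module.finrank ℝ E : ℝ) < p)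
    (hp' : p < Module.finrank ℝ E + 1) :
    IntegrableOn (fun z => ‖z‖ ^ (-p))
      {z | 0 < |⟪gradient f x, z⟫_ℝ| ∧
        |⟪gradient f x, z⟫_ℝ| ≤ |f (x + z) - f x - ⟪gradient f x, z⟫_ℝ|} := by
  rcases eq_or_ne (gradient f x) 0 with hν | hν
  · simp [hν]
  obtain ⟨K, r, hK, hr, htaylor⟩ := hf.exists_norm_sub_sub_fderiv_le
  have hinner : ∀ z, ⟪gradient f x, z⟫_ℝ = fderiv ℝ f x z := fun z =>
    InnerProductSpace.toDual_symm_apply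
  refine ((integrableOn_rpow_neg_norm_setOf_abs_inner_le_sq_inter_closedBall hν hK
    ((Nat.cast_nonneg _).trans_lt hp) hp' hr).union
    (integrableOn_rpow_neg_norm_of_le_norm hp hr)).mono_set ?_
  rintro z ⟨-, hz⟩
  rcases le_or_gt ‖z‖ r with hzr | hzr
  · refine Or.inl ⟨hz.trans ?_, mem_closedBall_zero_iff.mpr hzr⟩
    simpa only [hinner, Real.norm_eq_abs] using htaylor z hzr
  · exact Or.inr hzr.le

end InnerProductSpace

theorem abs_pos_and_abs_le_abs_sub_of_mul_neg {a b : ℝ} (h : a * b < 0) :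
    0 < |b| ∧ |b| ≤ |a - b| := by
  refine ⟨abs_pos.mpr (right_ne_zero_of_mul h.ne), ?_⟩
  rcases lt_or_gt_of_ne (right_ne_zero_of_mul h.ne) with hb | hb
  · have ha : 0 < a := pos_of_mul_neg_left h hb.le
    rw [abs_of_neg hb, abs_of_pos (by linarith)]; linarith
  · have ha : a < 0 := neg_of_mul_neg_left h hb.le
    rw [abs_of_pos hb, abs_of_neg (by linarith)]; linarith

theorem abs_signedDistOld {E : Type*} [MetricSpace E] (Ω : Set E) (x : E) :
    |signedDistOld Ω x| = Metric.infDist x (frontier Ω) := by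
  unfold signedDistOld
  split_ifs <;> simp [Metric.infDist_nonneg]

theorem stmt_11_general (n : ℕ) (s : ℝ) (hs : s ∈ Set.Ioo (0 : ℝ) (1/2))
    (Ω : Set (EuclideanSpace ℝ (Fin n))) (ρ : ℝ)
    (hsmooth : ContDiffOn ℝ 2 (signedDistOld Ω)
      {x : EuclideanSpace ℝ (Fin n) | |signedDistOld Ω x| < 2*ρ})
    (x : EuclideanSpace ℝ (Fin n)) (hx : |signedDistOld Ω x| < ρ) :
    IntegrableOn (fun z : EuclideanSpace ℝ (Fin n) => ‖z‖ ^ (-((n : ℝ) + 2*s)))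
      {z : EuclideanSpace ℝ (Fin n) |
        signedDistOld Ω x < signedDistOld Ω (x + z) ∧
        (inner ℝ (gradient (signedDistOld Ω) x) z : ℝ) < 0} ∧
    IntegrableOn (fun z : EuclideanSpace ℝ (Fin n) => ‖z‖ ^ (-((n : ℝ) + 2*s)))
      {z : EuclideanSpace ℝ (Fin n) |
        signedDistOld Ω (x + z) < signedDistOld Ω x ∧
        0 < (inner ℝ (gradient (signedDistOld Ω) x) z : ℝ)} := by
  obtain ⟨hs0, hs1⟩ := hs
  have htube : IsOpen {y | |signedDistOld Ω y| < 2 * ρ} := by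
    simp_rw [abs_signedDistOld]
    exact isOpen_lt (Metric.continuous_infDist_pt _) continuous_const
  have hd : ContDiffAt ℝ 2 (signedDistOld Ω) x :=
    hsmooth.contDiffAt <| htube.mem_nhds <| show |signedDistOld Ω x| < 2 * ρ by
      linarith [abs_nonneg (signedDistOld Ω x)]
  have hint := integrableOn_rpow_neg_norm_setOf_abs_inner_gradient_le_remainder hd
    (p := n + 2 * s) (by rw [finrank_euclideanSpace_fin]; linarith)
    (by rw [finrank_euclideanSpace_fin]; linarith)
  exact ⟨hint.mono_set fun z hz => abs_pos_and_abs_le_abs_sub_of_mul_neg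
      (mul_neg_of_pos_of_neg (sub_pos.mpr hz.1) hz.2),
    hint.mono_set fun z hz => abs_pos_and_abs_le_abs_sub_of_mul_neg
      (mul_neg_of_neg_of_pos (sub_neg.mpr hz.1) hz.2)⟩

/-- Let Ω ⊂ ℝ^n be bounded open with C² boundary and d its signed
distance function, smooth (C²) on the tubular neighborhood {|d| < 2ρ}. Then for every
x with |d(x)| < ρ, the integrals
κ⁺[x,d] = ∫_{{d(x+z)>d(x), ∇d(x)·z<0}} |z|^{-(n+2s)} dz and
κ⁻[x,d] = ∫_{{d(x+z)<d(x), ∇d(x)·z>0}} |z|^{-(n+2s)} dz are finite. -/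
theorem stmt_11 (n : ℕ) (hn : 2 ≤ n) (s : ℝ) (hs : s ∈ Set.Ioo (0 : ℝ) (1/2))
    (Ω : Set (EuclideanSpace ℝ (Fin n))) (hopen : IsOpen Ω) (hbdd : Bornology.IsBounded Ω)
    (ρ : ℝ) (hρ : 0 < ρ)
    (hsmooth : ContDiffOn ℝ 2 (signedDistOld Ω)
      {x : EuclideanSpace ℝ (Fin n) | |signedDistOld Ω x| < 2*ρ})
    (x : EuclideanSpace ℝ (Fin n)) (hx : |signedDistOld Ω x| < ρ) :
    IntegrableOn (fun z : EuclideanSpace ℝ (Fin n) => ‖z‖ ^ (-((n : ℝ) + 2*s)))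
      {z : EuclideanSpace ℝ (Fin n) |
        signedDistOld Ω x < signedDistOld Ω (x + z) ∧
        (inner ℝ (gradient (signedDistOld Ω) x) z : ℝ) < 0} ∧
    IntegrableOn (fun z : EuclideanSpace ℝ (Fin n) => ‖z‖ ^ (-((n : ℝ) + 2*s)))
      {z : EuclideanSpace ℝ (Fin n) |
        signedDistOld Ω (x + z) < signedDistOld Ω x ∧
        0 < (inner ℝ (gradient (signedDistOld Ω) x) z : ℝ)} :=
  stmt_11_general n s hs Ω ρ hsmooth x hx
end

section
/- Let φ : ℝ → ℝ be increasing, bounded with φ(−∞)=0, φ(+∞)=1, with |φ(ξ) − H(ξ)| ≤ C₀|ξ|^{-2s} for |ξ| ≥ 1, and let d : ℝ^n → ℝ be 1-Lipschitz. Fix x with d(x) ≥ ρ > 0 and suppose |d(x+z) − d(x) − ∇d(x)·z| ≤ C₀|z|², |∇d(x)| ≤ 1, and |φ'| ≤ C₀ with |φ'(ξ)| ≤ C₀|ξ|^{-(1+2s)} for |ξ| ≥ 1. If c > 0 is small enough that |z| ≤ cρ implies |d(x+z)−d(x)| ≤ ρ/4 and |∇d(x)·z| ≤ ρ/4, then |∫_{{|z|<cρ}}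 (φ(d(x+z)/ε) − φ((d(x)+∇d(x)·z)/ε)) |z|^{-(n+2s)} dz| ≤ C ρ^{1−4s} ε^{2s} for all ε ∈ (0,1), with C depending only on n, s, C₀, c. -/
/-!
On the ball `‖z‖ < c ρ` both `d (x + z)` and its linearization `d x + ⟪∇d x, z⟫` are at least
`ρ / 2`, so by the mean value theorem and the decay of `φ'` the integrand is at most
`C₀ (ρ / 2ε)^(-(1+2s)) · C₀ ‖z‖² / ε · ‖z‖^(-(n+2s))`. As `2 - n - 2s > -n`, the kernel
`‖z‖^(2-n-2s)` is integrable on the ball, with integral `n |B₁| (c ρ)^(2-2s) / (2 - 2s)` in polar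
coordinates, and the powers of `ρ` and `ε` combine to `ρ^(1-4s) ε^(2s)`.
-/

open MeasureTheory Set Filter Topology

noncomputable def heaviside (ξ : ℝ) : ℝ := if 0 ≤ ξ then 1 else 0

open Metric

section BallIntegral

local notation "dim" => Module.finrank ℝ

variable {E : Type*} [NormedAddCommGroup E] [NormedSpace ℝ E] [FiniteDimensional ℝ E]
  [Nontrivial E]

lemma pow_finrank_pred_mul_rpow {y : ℝ} (hy : 0 < y) (q : ℝ) :
    y ^ (dim E - 1) * y ^ q = y ^ ((dim E : ℝ) - 1 + q) := by
  rw [← Real.rpow_natCast, ← Real.rpow_add hy, Nat.cast_pred Module.finrank_pos]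

variable [MeasurableSpace E] [BorelSpace E] (μ : Measure E) [μ.IsAddHaarMeasure]

lemma integrableOn_rpow_norm_ball {q : ℝ} (hq : -(dim E : ℝ) < q) (R : ℝ) :
    IntegrableOn (fun x : E ↦ ‖x‖ ^ q) (ball 0 R) μ := by
  rw [integrableOn_fun_norm_addHaar μ (f := fun y : ℝ ↦ y ^ q)]
  have hint : IntegrableOn (fun y : ℝ ↦ y ^ ((dim E : ℝ) - 1 + q)) (Ioo 0 R) := by
    rcases le_or_gt R 0 with hR | hR
    · simp [Ioo_eq_empty_of_le hR]
    · exact (intervalIntegral.intervalIntegrable_rpow' (by linarith)).1.mono_set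
        Ioo_subset_Ioc_self
  refine hint.congr_fun (fun y hy ↦ ?_) measurableSet_Ioo
  exact (pow_finrank_pred_mul_rpow hy.1 q).symm

lemma integral_rpow_norm_ball {q : ℝ} (hq : -(dim E : ℝ) < q) {R : ℝ} (hR : 0 ≤ R) :
    ∫ x in ball (0 : E) R, ‖x‖ ^ q ∂μ =
      dim E * μ.real (ball 0 1) * (R ^ ((dim E : ℝ) + q) / ((dim E : ℝ) + q)) := by
  have hind : (ball (0 : E) R).indicator (fun x ↦ ‖x‖ ^ q) =
      fun x ↦ (Iio R).indicator (· ^ q) ‖x‖ := by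
    ext x; simp [indicator]
  rw [← integral_indicator measurableSet_ball, hind, integral_fun_norm_addHaar, nsmul_eq_mul,
    smul_eq_mul, mul_assoc]
  congr 2
  have hradial : ∫ y in Ioi (0:ℝ), y ^ (dim E - 1) • (Iio R).indicator (· ^ q) y
      = ∫ y in Ioc 0 R, y ^ ((dim E : ℝ) - 1 + q) := by
    have hind' : (fun y : ℝ ↦ y ^ (dim E - 1) • (Iio R).indicator (· ^ q) y) =
        (Iio R).indicator fun y ↦ y ^ (dim E - 1) * y ^ q := by
      ext y; simp [indicator]
    rw [hind', setIntegral_indicator measurableSet_Iio, Ioi_inter_Iio,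
      integral_Ioc_eq_integral_Ioo]
    exact setIntegral_congr_fun measurableSet_Ioo fun y hy ↦ pow_finrank_pred_mul_rpow hy.1 q
  rw [hradial, ← intervalIntegral.integral_of_le hR, integral_rpow (Or.inl (by linarith))]
  have hne : (dim E : ℝ) - 1 + q + 1 ≠ 0 := by linarith
  rw [Real.zero_rpow hne]
  ring_nf

end BallIntegral

section DerivativeDecay

variable {φ φ' : ℝ → ℝ} {C₀ p t : ℝ}

lemma abs_le_mul_rpow_neg_of_le (hbdd : ∀ ξ, |φ' ξ| ≤ C₀)
    (hdec : ∀ ξ : ℝ, 1 ≤ |ξ| → |φ' ξ| ≤ C₀ * |ξ| ^ (-p)) (hp : 0 ≤ p) (ht : 0 < t) {ξ : ℝ}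
    (hξ : t ≤ ξ) : |φ' ξ| ≤ C₀ * t ^ (-p) := by
  have hC₀ : 0 ≤ C₀ := (abs_nonneg _).trans (hbdd 0)
  rcases le_or_gt 1 ξ with h1 | h1
  · have hξ_abs : |ξ| = ξ := abs_of_pos (by linarith)
    calc |φ' ξ| ≤ C₀ * ξ ^ (-p) := by simpa only [hξ_abs] using hdec ξ (by rwa [hξ_abs])
      _ ≤ C₀ * t ^ (-p) :=
        mul_le_mul_of_nonneg_left (Real.rpow_le_rpow_of_nonpos ht hξ (by linarith)) hC₀
  · calc |φ' ξ| ≤ C₀ * 1 := by rw [mul_one]; exact hbdd ξ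
      _ ≤ C₀ * t ^ (-p) := by
        gcongr; exact Real.one_le_rpow_of_pos_of_le_one_of_nonpos ht (by linarith) (by linarith)

lemma abs_sub_le_of_hasDerivAt_of_decay (hderiv : ∀ ξ, HasDerivAt φ (φ' ξ) ξ)
    (hbdd : ∀ ξ, |φ' ξ| ≤ C₀) (hdec : ∀ ξ : ℝ, 1 ≤ |ξ| → |φ' ξ| ≤ C₀ * |ξ| ^ (-p))
    (hp : 0 ≤ p) (ht : 0 < t) {a b : ℝ} (ha : t ≤ a) (hb : t ≤ b) :
    |φ a - φ b| ≤ C₀ * t ^ (-p) * |a - b| :=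
  (convex_Ici t).norm_image_sub_le_of_norm_hasDerivWithin_le
    (fun ξ _ ↦ (hderiv ξ).hasDerivWithinAt)
    (fun _ hξ ↦ abs_le_mul_rpow_neg_of_le hbdd hdec hp ht hξ) hb ha

lemma abs_sub_div_mul_rpow_le (hderiv : ∀ ξ, HasDerivAt φ (φ' ξ) ξ)
    (hbdd : ∀ ξ, |φ' ξ| ≤ C₀) (hdec : ∀ ξ : ℝ, 1 ≤ |ξ| → |φ' ξ| ≤ C₀ * |ξ| ^ (-p))
    (hp : 0 ≤ p) {ρ u v w ε r k : ℝ} (hρ : 0 < ρ) (hu : ρ ≤ u) (hv : |v - u| ≤ ρ / 4)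
    (hw : |w| ≤ ρ / 4) (hvuw : |v - u - w| ≤ C₀ * r ^ 2) (hε : 0 < ε) (hr : 0 ≤ r)
    (hk : 2 + k ≠ 0) :
    |(φ (v / ε) - φ ((u + w) / ε)) * r ^ k| ≤
      C₀ ^ 2 * (ρ / (2 * ε)) ^ (-p) / ε * r ^ (2 + k) := by
  have hC₀ : 0 ≤ C₀ := (abs_nonneg _).trans (hbdd 0)
  have hle : ∀ y, ρ / 2 ≤ y → ρ / (2 * ε) ≤ y / ε := fun y hy ↦ by
    rw [← div_div]; gcongr
  have hdiff : |v / ε - (u + w) / ε| = |v - u - w| / ε := by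
    rw [← sub_div, abs_div, abs_of_pos hε, sub_sub]
  have hφ := abs_sub_le_of_hasDerivAt_of_decay hderiv hbdd hdec hp (by positivity)
    (hle v (by linarith [(abs_le.1 hv).1])) (hle (u + w) (by linarith [(abs_le.1 hw).1]))
  rw [abs_mul, abs_of_nonneg (Real.rpow_nonneg hr k)]
  calc _ ≤ C₀ * (ρ / (2 * ε)) ^ (-p) * (C₀ * r ^ 2 / ε) * r ^ k := by
        gcongr
        exact hφ.trans (by rw [hdiff]; gcongr)
    _ = _ := by
        rw [Real.rpow_add' hr hk, Real.rpow_two]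
        ring

end DerivativeDecay

lemma rpow_div_two_mul_mul_rpow_mul {ρ ε c s : ℝ} (hρ : 0 < ρ) (hε : 0 < ε) (hc : 0 < c) :
    (ρ / (2 * ε)) ^ (-(1 + 2 * s)) / ε * (c * ρ) ^ (2 - 2 * s) =
      2 ^ (1 + 2 * s) * c ^ (2 - 2 * s) * ρ ^ (1 - 4 * s) * ε ^ (2 * s) := by
  have hρ' : ρ ^ (1 - 4 * s) = ρ ^ (2 - 2 * s) / ρ ^ (1 + 2 * s) := by
    rw [← Real.rpow_sub hρ]; ring_nf
  rw [Real.rpow_neg (by positivity), ← Real.inv_rpow (by positivity), inv_div,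
    Real.div_rpow (by positivity) hρ.le, Real.mul_rpow zero_le_two hε.le,
    Real.mul_rpow hc.le hρ.le, Real.rpow_add hε, Real.rpow_one, hρ']
  field_simp

/-- Near-field estimate far from the front. Under the stated hypotheses
on the phase transition φ and the 1-Lipschitz function d with d(x) ≥ ρ > 0,
|∫_{|z|<cρ} (φ(d(x+z)/ε) − φ((d(x)+∇d(x)·z)/ε)) |z|^{-(n+2s)} dz| ≤ C ρ^{1−4s} ε^{2s}
for all ε ∈ (0,1), with C depending only on n, s, C₀, c. -/
theorem stmt_16 (n : ℕ) (hn : 2 ≤ n) (s : ℝ) (hs : s ∈ Set.Ioo (0 : ℝ) (1/2))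
    (C₀ c : ℝ) (hC₀ : 0 < C₀) (hc : 0 < c) :
    ∃ C : ℝ, 0 < C ∧
      ∀ (φ φ' : ℝ → ℝ) (d : EuclideanSpace ℝ (Fin n) → ℝ)
        (x : EuclideanSpace ℝ (Fin n)) (ρ : ℝ),
        Monotone φ → Tendsto φ atBot (𝓝 0) → Tendsto φ atTop (𝓝 1) →
        (∀ ξ : ℝ, 1 ≤ |ξ| → |φ ξ - heaviside ξ| ≤ C₀ * |ξ| ^ (-(2*s))) →
        (∀ ξ, HasDerivAt φ (φ' ξ) ξ) →
        (∀ ξ, |φ' ξ| ≤ C₀) →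
        (∀ ξ : ℝ, 1 ≤ |ξ| → |φ' ξ| ≤ C₀ * |ξ| ^ (-(1 + 2*s))) →
        LipschitzWith 1 d → 0 < ρ → ρ ≤ d x → ‖gradient d x‖ ≤ 1 →
        (∀ z : EuclideanSpace ℝ (Fin n),
          |d (x + z) - d x - (inner ℝ (gradient d x) z : ℝ)| ≤ C₀ * ‖z‖^2) →
        (∀ z : EuclideanSpace ℝ (Fin n), ‖z‖ ≤ c * ρ →
          |d (x + z) - d x| ≤ ρ/4 ∧ |(inner ℝ (gradient d x) z : ℝ)| ≤ ρ/4) →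
        ∀ ε : ℝ, ε ∈ Set.Ioo (0:ℝ) 1 →
          |∫ z in {z : EuclideanSpace ℝ (Fin n) | ‖z‖ < c * ρ},
              (φ (d (x + z) / ε) - φ ((d x + (inner ℝ (gradient d x) z : ℝ)) / ε))
                * ‖z‖ ^ (-((n : ℝ) + 2*s))|
            ≤ C * ρ ^ (1 - 4*s) * ε ^ (2*s) := by
  obtain ⟨hs0, hs1⟩ := hs
  have hn' : (2 : ℝ) ≤ n := by exact_mod_cast hn
  have hdim : Module.finrank ℝ (EuclideanSpace ℝ (Fin n)) = n := finrank_euclideanSpace_fin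
  have : Nontrivial (EuclideanSpace ℝ (Fin n)) :=
    Module.nontrivial_of_finrank_pos (R := ℝ) (by omega)
  have hq : -(Module.finrank ℝ (EuclideanSpace ℝ (Fin n)) : ℝ) < 2 + -(n + 2 * s) := by
    rw [hdim]; linarith
  set V := volume.real (ball (0 : EuclideanSpace ℝ (Fin n)) 1)
  have hV : 0 < V := ENNReal.toReal_pos (measure_ball_pos _ _ one_pos).ne' measure_ball_lt_top.ne
  refine ⟨C₀ ^ 2 * (n * V / (2 - 2 * s)) * (2 ^ (1 + 2 * s) * c ^ (2 - 2 * s)), ?_, ?_⟩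
  · have : 0 < 2 - 2 * s := by linarith
    positivity
  intro φ φ' d x ρ _ _ _ _ hderiv hbdd hdec _ hρ hρd _ hquad hsmall ε ⟨hε, _⟩
  set A := C₀ ^ 2 * (ρ / (2 * ε)) ^ (-(1 + 2 * s)) / ε with hA
  have hpt : ∀ z ∈ ball (0 : EuclideanSpace ℝ (Fin n)) (c * ρ),
      ‖(φ (d (x + z) / ε) - φ ((d x + (inner ℝ (gradient d x) z : ℝ)) / ε))
        * ‖z‖ ^ (-((n : ℝ) + 2*s))‖ ≤ A * ‖z‖ ^ (2 + -(n + 2 * s)) := fun z hz ↦ by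
    obtain ⟨hv, hw⟩ := hsmall z (mem_ball_zero_iff.1 hz).le
    exact abs_sub_div_mul_rpow_le hderiv hbdd hdec (by linarith) hρ hρd hv hw (hquad z) hε
      (norm_nonneg z) (by linarith)
  have hball : {z : EuclideanSpace ℝ (Fin n) | ‖z‖ < c * ρ} = ball 0 (c * ρ) := by
    ext z; simp
  rw [hball, ← Real.norm_eq_abs]
  calc _ ≤ ∫ z in ball (0 : EuclideanSpace ℝ (Fin n)) (c * ρ), A * ‖z‖ ^ (2 + -(n + 2 * s)) :=
        norm_integral_le_of_norm_le ((integrableOn_rpow_norm_ball volume hq _).const_mul A)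
          (ae_restrict_of_forall_mem measurableSet_ball hpt)
    _ = _ := by
        have hexp : (n : ℝ) + (2 + -(n + 2 * s)) = 2 - 2 * s := by ring
        rw [integral_const_mul, integral_rpow_norm_ball volume hq (by positivity), hdim, hexp, hA]
        linear_combination (C₀ ^ 2 * (n * V / (2 - 2 * s))) *
          rpow_div_two_mul_mul_rpow_mul (s := s) hρ hε hc
end

section
/- Let ψ : ℝ → ℝ be a bounded Lipschitz function with |ψ(ξ)|, |ψ'(ξ)| ≤ A (1+|ξ|^{2s})^{-1}, let d : ℝ^n → ℝ be smooth with |∇d(x)| = 1 at a given point x and with globally bounded Hessian. Then, for ε, δ ∈ (0,1) with |d(x)| < δ/2 and ε/δ² ≤ 1, the quantity |∫_{ℝ^n} (ψ(d(x+εz)/ε) − ψ(d(x)/ε + ∇d(x)·z)) |z|^{-(n+2s)} dz| ≤ C A ε^s / δ^{2s}, with C depending only on n, s, and the Hessian bound. -/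
/-!
Since ψ is bounded by `A` and `A`-Lipschitz, and the second-order Taylor bound for `d` puts the
two arguments of ψ within `Kε|z|²` of each other, the integrand is dominated by the radial function
`min (AKε|z|², 2A) |z|^{-(n+2s)}`. In polar coordinates its integral splits at a radius `R`: the
inner part is at most `AKε R^{2-2s}/(2-2s)`, the outer part at most `A R^{-2s}/s`, and
`R = ε^{-1/2}` makes both of order `A ε^s`. Finally `δ^{2s} ≤ 1`.
-/

open MeasureTheory Set

lemma lintegral_Ioc_zero_rpow {r R : ℝ} (hr : -1 < r) (hR : 0 ≤ R) :
    ∫⁻ y in Ioc 0 R, ENNReal.ofReal (y ^ r) = ENNReal.ofReal (R ^ (r + 1) / (r + 1)) := by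
  rw [← ofReal_integral_eq_lintegral_ofReal (intervalIntegral.intervalIntegrable_rpow' hr).1
      ((ae_restrict_mem measurableSet_Ioc).mono fun y hy ↦ Real.rpow_nonneg hy.1.le r),
    ← intervalIntegral.integral_of_le hR, integral_rpow (Or.inl hr),
    Real.zero_rpow (by linarith), sub_zero]

lemma lintegral_Ioi_rpow {r R : ℝ} (hr : r < -1) (hR : 0 < R) :
    ∫⁻ y in Ioi R, ENNReal.ofReal (y ^ r) = ENNReal.ofReal (-R ^ (r + 1) / (r + 1)) := by
  rw [← ofReal_integral_eq_lintegral_ofReal (integrableOn_Ioi_rpow_of_lt hr hR)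
      ((ae_restrict_mem measurableSet_Ioi).mono fun y hy ↦ Real.rpow_nonneg (hR.trans hy).le r),
    integral_Ioi_rpow_of_lt hr hR]

lemma lintegral_Ioi_zero_min_sq_mul_rpow_le {s a b : ℝ} (hs₀ : 0 < s) (hs₁ : s < 1)
    (ha : 0 ≤ a) (hb : 0 ≤ b) {R : ℝ} (hR : 0 < R) :
    ∫⁻ y in Ioi 0, ENNReal.ofReal (min (a * y ^ 2) b * y ^ (-1 - 2 * s))
      ≤ ENNReal.ofReal (a * R ^ (2 - 2 * s) / (2 - 2 * s) + b * R ^ (-(2 * s)) / (2 * s)) := by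
  have h_near : ∫⁻ y in Ioc 0 R, ENNReal.ofReal (min (a * y ^ 2) b * y ^ (-1 - 2 * s))
      ≤ ENNReal.ofReal a * ∫⁻ y in Ioc 0 R, ENNReal.ofReal (y ^ (1 - 2 * s)) := by
    rw [← lintegral_const_mul' _ _ ENNReal.ofReal_ne_top]
    refine setLIntegral_mono' measurableSet_Ioc fun y hy ↦ ?_
    rw [← ENNReal.ofReal_mul ha]
    refine ENNReal.ofReal_le_ofReal ?_
    calc min (a * y ^ 2) b * y ^ (-1 - 2 * s) ≤ a * y ^ 2 * y ^ (-1 - 2 * s) :=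
          mul_le_mul_of_nonneg_right (min_le_left _ _) (Real.rpow_nonneg hy.1.le _)
      _ = a * y ^ (1 - 2 * s) := by
          rw [mul_assoc, ← Real.rpow_natCast, ← Real.rpow_add hy.1]
          congr 2
          push_cast
          ring
  have h_far : ∫⁻ y in Ioi R, ENNReal.ofReal (min (a * y ^ 2) b * y ^ (-1 - 2 * s))
      ≤ ENNReal.ofReal b * ∫⁻ y in Ioi R, ENNReal.ofReal (y ^ (-1 - 2 * s)) := by
    rw [← lintegral_const_mul' _ _ ENNReal.ofReal_ne_top]
    refine setLIntegral_mono' measurableSet_Ioi fun y hy ↦ ?_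
    rw [← ENNReal.ofReal_mul hb]
    exact ENNReal.ofReal_le_ofReal <|
      mul_le_mul_of_nonneg_right (min_le_right _ _) (Real.rpow_nonneg (hR.trans hy).le _)
  rw [← Ioc_union_Ioi_eq_Ioi hR.le, lintegral_union measurableSet_Ioi Ioc_disjoint_Ioi_same]
  refine (add_le_add h_near h_far).trans_eq ?_
  rw [lintegral_Ioc_zero_rpow (by linarith) hR.le, lintegral_Ioi_rpow (by linarith) hR,
    show 1 - 2 * s + 1 = 2 - 2 * s by ring, show -1 - 2 * s + 1 = -(2 * s) by ring,
    neg_div_neg_eq, ← ENNReal.ofReal_mul ha, ← ENNReal.ofReal_mul hb, ← ENNReal.ofReal_add]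
  · simp only [mul_div_assoc]
  · have : 0 < 2 - 2 * s := by linarith
    positivity
  · positivity

section Polar

variable {E : Type*} [NormedAddCommGroup E] [NormedSpace ℝ E] [MeasurableSpace E] [BorelSpace E]
  [FiniteDimensional ℝ E] [Nontrivial E] (μ : Measure E) [μ.IsAddHaarMeasure]

open Metric Measure in
lemma lintegral_fun_norm_addHaar {f : ℝ → ENNReal} (hf : Measurable f) :
    ∫⁻ x, f ‖x‖ ∂μ = μ.toSphere univ *
      ∫⁻ y in Ioi (0 : ℝ), ENNReal.ofReal (y ^ (Module.finrank ℝ E - 1)) * f y := by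
  calc
    ∫⁻ x, f ‖x‖ ∂μ = ∫⁻ x : ({(0 : E)}ᶜ : Set E), f ‖(x : E)‖ ∂(μ.comap (↑)) := by
      rw [lintegral_subtype_comap (measurableSet_singleton _).compl fun x ↦ f ‖x‖,
        restrict_compl_singleton]
    _ = ∫⁻ p : sphere (0 : E) 1 × Ioi (0 : ℝ), f p.2
          ∂(μ.toSphere.prod (volumeIoiPow (Module.finrank ℝ E - 1))) := by
      rw [← μ.measurePreserving_homeomorphUnitSphereProd.map_eq,
        lintegral_map (by fun_prop) (Homeomorph.measurable _)]
      simp [homeomorphUnitSphereProd]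
    _ = μ.toSphere univ * ∫⁻ y : Ioi (0 : ℝ), f y ∂(volumeIoiPow (Module.finrank ℝ E - 1)) := by
      rw [← lintegral_map (f := fun y : Ioi (0 : ℝ) ↦ f y) (by fun_prop) measurable_snd,
        map_snd_prod, lintegral_smul_measure, smul_eq_mul]
    _ = _ := by
      rw [volumeIoiPow, lintegral_withDensity_eq_lintegral_mul _ (by fun_prop) (by fun_prop),
        ← lintegral_subtype_comap measurableSet_Ioi]
      rfl

variable {s a b R : ℝ}

lemma lintegral_min_sq_mul_norm_rpow_le (hs₀ : 0 < s) (hs₁ : s < 1) (ha : 0 ≤ a) (hb : 0 ≤ b)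
    (hR : 0 < R) :
    ∫⁻ z, ENNReal.ofReal (min (a * ‖z‖ ^ 2) b * ‖z‖ ^ (-((Module.finrank ℝ E : ℝ) + 2 * s))) ∂μ
      ≤ μ.toSphere univ *
        ENNReal.ofReal (a * R ^ (2 - 2 * s) / (2 - 2 * s) + b * R ^ (-(2 * s)) / (2 * s)) := by
  have hd : 1 ≤ Module.finrank ℝ E := Module.finrank_pos
  rw [lintegral_fun_norm_addHaar μ (f := fun r ↦ ENNReal.ofReal
    (min (a * r ^ 2) b * r ^ (-((Module.finrank ℝ E : ℝ) + 2 * s)))) (by fun_prop)]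
  gcongr
  refine le_of_eq_of_le (setLIntegral_congr_fun measurableSet_Ioi fun y (hy : 0 < y) ↦ ?_)
    (lintegral_Ioi_zero_min_sq_mul_rpow_le hs₀ hs₁ ha hb hR)
  rw [← ENNReal.ofReal_mul (by positivity), mul_left_comm,
    ← Real.rpow_natCast y (Module.finrank ℝ E - 1),
    ← Real.rpow_add hy, Nat.cast_sub hd, Nat.cast_one]
  congr 3
  ring

lemma abs_integral_le_of_abs_le_min_sq_mul_norm_rpow (hs₀ : 0 < s) (hs₁ : s < 1) (ha : 0 ≤ a)
    (hb : 0 ≤ b) (hR : 0 < R) {g : E → ℝ}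
    (hg : ∀ z, |g z| ≤ min (a * ‖z‖ ^ 2) b * ‖z‖ ^ (-((Module.finrank ℝ E : ℝ) + 2 * s))) :
    |∫ z, g z ∂μ| ≤ μ.toSphere.real univ *
      (a * R ^ (2 - 2 * s) / (2 - 2 * s) + b * R ^ (-(2 * s)) / (2 * s)) := by
  have hbound : 0 ≤ a * R ^ (2 - 2 * s) / (2 - 2 * s) + b * R ^ (-(2 * s)) / (2 * s) := by
    have : 0 < 2 - 2 * s := by linarith
    positivity
  calc |∫ z, g z ∂μ| ≤ (∫⁻ z, ENNReal.ofReal ‖g z‖ ∂μ).toReal :=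
        norm_integral_le_lintegral_norm g
    _ ≤ (μ.toSphere univ * ENNReal.ofReal _).toReal :=
        ENNReal.toReal_mono (by finiteness) <| (lintegral_mono fun z ↦
          ENNReal.ofReal_le_ofReal (hg z)).trans
          (lintegral_min_sq_mul_norm_rpow_le μ hs₀ hs₁ ha hb hR)
    _ = _ := by rw [ENNReal.toReal_mul, ENNReal.toReal_ofReal hbound, measureReal_def]

end Polar

lemma abs_sub_le_min_of_hasDerivAt {ψ ψ' : ℝ → ℝ} {A : ℝ} (hψ : ∀ ξ, HasDerivAt ψ (ψ' ξ) ξ)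
    (hψA : ∀ ξ, |ψ ξ| ≤ A) (hψ'A : ∀ ξ, |ψ' ξ| ≤ A) (u v : ℝ) :
    |ψ u - ψ v| ≤ min (A * |u - v|) (2 * A) := by
  refine le_min ?_ ?_
  · simpa only [Real.norm_eq_abs] using convex_univ.norm_image_sub_le_of_norm_hasDerivWithin_le
      (fun ξ _ ↦ (hψ ξ).hasDerivWithinAt) (fun ξ _ ↦ hψ'A ξ) (mem_univ v) (mem_univ u)
  · linarith [abs_sub (ψ u) (ψ v), hψA u, hψA v]

lemma abs_div_sub_inner_le {F : Type*} [NormedAddCommGroup F] [InnerProductSpace ℝ F]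
    {d : F → ℝ} {x v : F} {K ε : ℝ} (hε : 0 < ε)
    (hd : ∀ w, |d (x + w) - d x - inner ℝ v w| ≤ K * ‖w‖ ^ 2) (z : F) :
    |d (x + ε • z) / ε - (d x / ε + inner ℝ v z)| ≤ K * ε * ‖z‖ ^ 2 := by
  have h := hd (ε • z)
  rw [real_inner_smul_right, norm_smul, Real.norm_eq_abs, abs_of_pos hε] at h
  rw [show d (x + ε • z) / ε - (d x / ε + inner ℝ v z)
      = (d (x + ε • z) - d x - ε * inner ℝ v z) / ε by field_simp; ring,
    abs_div, abs_of_pos hε, div_le_iff₀ hε]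
  linarith

/-- Let ψ be bounded Lipschitz with |ψ|, |ψ'| ≤ A(1+|ξ|^{2s})^{-1}, and
d smooth with |∇d(x)| = 1 at the given x and globally bounded Hessian (encoded by the
quadratic Taylor bound with constant K). For ε, δ ∈ (0,1) with |d(x)| < δ/2 and
ε/δ² ≤ 1,
|∫ (ψ(d(x+εz)/ε) − ψ(d(x)/ε + ∇d(x)·z)) |z|^{-(n+2s)} dz| ≤ C A ε^s/δ^{2s},
with C depending only on n, s and the Hessian bound K. -/
theorem stmt_18 (n : ℕ) (hn : 2 ≤ n) (s : ℝ) (hs : s ∈ Set.Ioo (0 : ℝ) (1/2))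
    (A K : ℝ) (hA : 0 < A) (hK : 0 < K) :
    ∃ C : ℝ, 0 < C ∧
      ∀ (ψ ψ' : ℝ → ℝ) (d : EuclideanSpace ℝ (Fin n) → ℝ)
        (x : EuclideanSpace ℝ (Fin n)) (ε δ : ℝ),
        (∀ ξ, HasDerivAt ψ (ψ' ξ) ξ) →
        (∀ ξ, |ψ ξ| ≤ A / (1 + |ξ| ^ (2*s))) →
        (∀ ξ, |ψ' ξ| ≤ A / (1 + |ξ| ^ (2*s))) →
        ContDiff ℝ 2 d → ‖gradient d x‖ = 1 →
        (∀ y z : EuclideanSpace ℝ (Fin n),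
          |d (y + z) - d y - (inner ℝ (gradient d y) z : ℝ)| ≤ K * ‖z‖^2) →
        ε ∈ Set.Ioo (0:ℝ) 1 → δ ∈ Set.Ioo (0:ℝ) 1 →
        |d x| < δ/2 → ε / δ^2 ≤ 1 →
        |∫ z : EuclideanSpace ℝ (Fin n),
            (ψ (d (x + ε • z) / ε) - ψ (d x / ε + (inner ℝ (gradient d x) z : ℝ)))
              * ‖z‖ ^ (-((n : ℝ) + 2*s))|
          ≤ C * A * ε ^ s / δ ^ (2*s) := by
  obtain ⟨hs₀, hs₁⟩ := hs
  have : Nontrivial (EuclideanSpace ℝ (Fin n)) :=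
    Module.nontrivial_of_finrank_pos (R := ℝ) (by rw [finrank_euclideanSpace_fin]; omega)
  set σ := (volume : Measure (EuclideanSpace ℝ (Fin n))).toSphere.real univ
  have : NeZero (volume : Measure (EuclideanSpace ℝ (Fin n))).toSphere :=
    ⟨Measure.toSphere_ne_zero _⟩
  have hσ : 0 < σ := measureReal_univ_pos
  have h2s : 0 < 2 - 2 * s := by linarith
  refine ⟨σ * (K / (2 - 2 * s) + 1 / s), by positivity, ?_⟩
  intro ψ ψ' d x ε δ hψ hψA hψ'A _ _ hd ⟨hε₀, _⟩ ⟨hδ₀, hδ₁⟩ _ _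
  have hA_bound : ∀ ξ : ℝ, A / (1 + |ξ| ^ (2 * s)) ≤ A := fun ξ ↦
    div_le_self hA.le (le_add_of_nonneg_right (by positivity))
  have hpt : ∀ z : EuclideanSpace ℝ (Fin n),
      |(ψ (d (x + ε • z) / ε) - ψ (d x / ε + inner ℝ (gradient d x) z))
          * ‖z‖ ^ (-((n : ℝ) + 2 * s))|
        ≤ min (A * K * ε * ‖z‖ ^ 2) (2 * A) * ‖z‖ ^ (-((n : ℝ) + 2 * s)) := by
    intro z
    have hkernel : 0 ≤ ‖z‖ ^ (-((n : ℝ) + 2 * s)) := Real.rpow_nonneg (norm_nonneg z) _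
    rw [abs_mul, abs_of_nonneg hkernel, mul_assoc A K ε, mul_assoc A (K * ε)]
    refine mul_le_mul_of_nonneg_right ((abs_sub_le_min_of_hasDerivAt hψ
      (fun ξ ↦ (hψA ξ).trans (hA_bound ξ)) (fun ξ ↦ (hψ'A ξ).trans (hA_bound ξ)) _ _).trans ?_)
      hkernel
    gcongr
    exact abs_div_sub_inner_le hε₀ (hd x) z
  set R := ε ^ (-(1 / 2) : ℝ)
  have hR_near : R ^ (2 - 2 * s) = ε ^ s / ε := by
    rw [← Real.rpow_mul hε₀.le, ← Real.rpow_sub_one hε₀.ne']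
    ring_nf
  have hR_far : R ^ (-(2 * s)) = ε ^ s := by
    rw [← Real.rpow_mul hε₀.le]
    ring_nf
  calc _ ≤ σ * (A * K * ε * R ^ (2 - 2 * s) / (2 - 2 * s) + 2 * A * R ^ (-(2 * s)) / (2 * s)) :=
        abs_integral_le_of_abs_le_min_sq_mul_norm_rpow volume hs₀ (by linarith) (by positivity)
          (by positivity) (by positivity) (by rw [finrank_euclideanSpace_fin]; exact hpt)
    _ = σ * (K / (2 - 2 * s) + 1 / s) * A * ε ^ s := by
        rw [hR_near, hR_far]
        field_simp
    _ ≤ σ * (K / (2 - 2 * s) + 1 / s) * A * ε ^ s / δ ^ (2 * s) :=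
        le_div_self (by positivity) (by positivity)
          (Real.rpow_le_one hδ₀.le hδ₁.le (by positivity))
end
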